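/- arXiv:cs/0408003 — 3 statements merged into one kernel-verified Lean document; each statement's English description precedes it below -/
import Mathlib

section
/- Let G be a finite connected simple graph whose shortest-path metric dist_G has diameter Δ ≥ 1 (i.e., the maximum of dist_G over pairs of vertices equals Δ). If T is an ultrametric space and f : T → V(G) is a surjective map with d_T(u,v) ≥ dist_G(f(u), f(v)) for all u,v ∈ T, and f has path distortion at most α with respect to the metric dist_G, then α ≥ ((Δ+1)·log₂(Δ+1))/(2Δ). -/
/-- An ultrametric space: the distance satisfies the strong triangle inequality. -/
def IsUltrametricSpace (X : Type*) [MetricSpace X] : Prop :=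
  ∀ x y z : X, dist x z ≤ max (dist x y) (dist y z)

/-- The length of a path (finite sequence of points) in a metric space. -/
noncomputable def pathLength {X : Type*} [MetricSpace X] (p : List X) : ℝ :=
  (List.zipWith dist p p.tail).sum

/-- The length of a path of vertices of a graph `G` with respect to the shortest-path
metric `dist_G`. -/
noncomputable def graphPathLength {V : Type*} (G : SimpleGraph V) (p : List V) : ℝ :=
  (List.zipWith (fun a b => (G.dist a b : ℝ)) p p.tail).sum

/-- A multi-embedding `f : T → V(G)`, non-contractive for `dist_G`, has path distortion
at most `α` with respect to `dist_G`. -/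
def GraphPathDistortionLE {T V : Type*} [MetricSpace T] (G : SimpleGraph V)
    (f : T → V) (α : ℝ) : Prop :=
  ∀ p : List V, ∃ p' : List T, p'.map f = p ∧ pathLength p' ≤ α * graphPathLength G p

/-!
Lift a geodesic `v₀, …, v_Δ` of `G` to points `t₀, …, t_Δ` of `T`. Non-contraction gives
`d(tᵢ, tⱼ) ≥ j - i`, and the strong triangle inequality moves this bound onto a single
step: every window `[i, j)` contains a step `d(t_k, t_{k+1}) ≥ j - i`. Splitting `[0, n)`
at the step that carries the whole window and recursing on both sides, the total length
is at least `g(n) = (n + 1) log₂ (n + 1) / 2`, because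
`g(a + b + 1) ≤ (a + b + 1) + g(a) + g(b)` by convexity of `x log x`. The geodesic itself
has length `Δ`, so `α ≥ g(Δ) / Δ`.
-/

open Real Finset

theorem mul_log_add_le {x y : ℝ} (hx : 0 ≤ x) (hy : 0 ≤ y) :
    (x + y) * log (x + y) ≤ x * log x + y * log y + (x + y) * log 2 := by
  rcases (add_nonneg hx hy).eq_or_lt with hxy | hxy
  · obtain rfl : x = 0 := by linarith
    obtain rfl : y = 0 := by linarith
    simp
  have hmid := convexOn_mul_log.2 (Set.mem_Ici.2 hx) (Set.mem_Ici.2 hy)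
    (by norm_num : (0 : ℝ) ≤ 1 / 2) (by norm_num : (0 : ℝ) ≤ 1 / 2) (by norm_num)
  have hhalf : (1 / 2 : ℝ) * x + 1 / 2 * y = (x + y) / 2 := by ring
  simp only [smul_eq_mul] at hmid
  rw [hhalf, log_div hxy.ne' two_ne_zero] at hmid
  linarith

theorem mul_logb_two_add_le {x y : ℝ} (hx : 0 ≤ x) (hy : 0 ≤ y) :
    (x + y) * logb 2 (x + y) ≤ x * logb 2 x + y * logb 2 y + (x + y) := by
  have hlog2 : 0 < log 2 := log_pos one_lt_two
  simp only [logb, ← mul_div_assoc]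
  rw [← add_div, div_add' _ _ _ hlog2.ne', div_le_div_iff_of_pos_right hlog2]
  exact mul_log_add_le hx hy

noncomputable def windowBound (n : ℕ) : ℝ := ((n : ℝ) + 1) * logb 2 ((n : ℝ) + 1) / 2

theorem windowBound_add_add_one_le (a b : ℕ) :
    windowBound (a + b + 1) ≤ (a + b + 1 : ℝ) + windowBound a + windowBound b := by
  have hsplit := mul_logb_two_add_le (by positivity : (0 : ℝ) ≤ a + 1)
    (by positivity : (0 : ℝ) ≤ b + 1)
  simp only [windowBound]
  push_cast
  rw [show (a : ℝ) + b + 1 + 1 = (a + 1) + (b + 1) by ring]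
  linarith

theorem windowBound_le_sum_of_forall_window (n : ℕ) (d : ℕ → ℝ)
    (hd : ∀ i j, i < j → j ≤ n → ∃ k ∈ Ico i j, (j - i : ℝ) ≤ d k) :
    windowBound n ≤ ∑ k ∈ range n, d k := by
  induction n using Nat.strong_induction_on generalizing d with
  | _ n ih =>
  rcases Nat.eq_zero_or_pos n with rfl | hn
  · simp [windowBound]
  obtain ⟨k, hk, hdk⟩ := hd 0 n hn le_rfl
  obtain ⟨-, hkn⟩ := mem_Ico.1 hk
  obtain ⟨m, rfl⟩ : ∃ m, n = k + 1 + m := ⟨n - k - 1, by omega⟩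
  have hleft := ih k (by omega) d fun i j hij hj => hd i j hij (by omega)
  have hright := ih m (by omega) (fun i => d (k + 1 + i)) fun i j hij hj => by
    obtain ⟨l, hl, hdl⟩ := hd (k + 1 + i) (k + 1 + j) (by omega) (by omega)
    obtain ⟨hl₁, hl₂⟩ := mem_Ico.1 hl
    refine ⟨l - (k + 1), mem_Ico.2 ⟨by omega, by omega⟩, ?_⟩
    rw [show k + 1 + (l - (k + 1)) = l by omega]
    push_cast at hdl
    linarith
  rw [sum_range_add, sum_range_succ]
  have := windowBound_add_add_one_le k m
  rw [add_right_comm] at this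
  push_cast at hdk this ⊢
  linarith

theorem IsUltrametricDist.exists_dist_le_dist_succ {X : Type*} [PseudoMetricSpace X]
    [IsUltrametricDist X] (u : ℕ → X) {i j : ℕ} (hij : i < j) :
    ∃ k ∈ Ico i j, dist (u i) (u j) ≤ dist (u k) (u (k + 1)) := by
  induction j, hij using Nat.le_induction with
  | base => exact ⟨i, by simp, le_rfl⟩
  | succ j hij ih =>
    obtain ⟨k, hk, hdk⟩ := ih
    rcases le_max_iff.1 (dist_triangle_max (u i) (u j) (u (j + 1))) with h | h
    · exact ⟨k, by simp at hk ⊢; omega, h.trans hdk⟩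
    · exact ⟨j, by simp; omega, h⟩

theorem List.sum_zipWith_tail_eq_sum_range {X M : Type*} [AddCommMonoid M] (F : X → X → M)
    (l : List X) (d : X) :
    (List.zipWith F l l.tail).sum =
      ∑ i ∈ Finset.range (l.length - 1), F (l.getD i d) (l.getD (i + 1) d) := by
  induction l with
  | nil => simp
  | cons a l ih =>
    cases l with
    | nil => simp
    | cons b l =>
      simp only [List.tail_cons, List.zipWith_cons_cons, List.sum_cons] at ih ⊢
      rw [ih, List.length_cons (a := a), Nat.add_sub_cancel, List.length_cons,
        Finset.sum_range_succ', add_comm]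
      simp

namespace SimpleGraph.Walk

variable {V : Type*} {G : SimpleGraph V} {a b : V}

theorem getD_support (w : G.Walk a b) {i : ℕ} (hi : i ≤ w.length) (d : V) :
    w.support.getD i d = w.getVert i := by
  rw [List.getD_eq_getElem _ _ (by simp; omega), support_getElem_eq_getVert]

theorem dist_getVert_of_length_eq_dist (w : G.Walk a b) (hw : w.length = G.dist a b)
    {i j : ℕ} (hij : i ≤ j) (hj : j ≤ w.length) :
    G.dist (w.getVert i) (w.getVert j) = j - i := by
  have h := length_eq_dist_of_subwalk hw (((w.drop i).isSubwalk_take (j - i)).trans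
    (w.isSubwalk_drop i))
  rw [take_length, drop_length, drop_getVert, Nat.add_sub_cancel' hij,
    min_eq_left (by omega)] at h
  exact h.symm

theorem graphPathLength_support (w : G.Walk a b) : graphPathLength G w.support = w.length := by
  rw [graphPathLength, List.sum_zipWith_tail_eq_sum_range _ _ a, length_support,
    Nat.add_sub_cancel]
  have hstep : ∀ i ∈ Finset.range w.length,
      (G.dist (w.support.getD i a) (w.support.getD (i + 1) a) : ℝ) = 1 := by
    intro i hi
    rw [Finset.mem_range] at hi
    rw [w.getD_support hi.le, w.getD_support hi, dist_eq_one_iff_adj.2 (w.adj_getVert_succ hi),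
      Nat.cast_one]
  rw [Finset.sum_congr rfl hstep]
  simp

end SimpleGraph.Walk

theorem windowBound_le_pathLength_of_map_eq_support {V T : Type*} [MetricSpace T]
    [IsUltrametricDist T] {G : SimpleGraph V} (f : T → V)
    (hnc : ∀ u v : T, (G.dist (f u) (f v) : ℝ) ≤ dist u v) {a b : V} (w : G.Walk a b)
    (hw : w.length = G.dist a b) {p : List T} (hp : p.map f = w.support) :
    windowBound w.length ≤ pathLength p := by
  have hlen : p.length = w.length + 1 := by
    rw [← SimpleGraph.Walk.length_support, ← hp, List.length_map]
  obtain ⟨t, -⟩ := List.exists_mem_of_length_pos (hlen ▸ Nat.succ_pos _ : 0 < p.length)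
  have hfu : ∀ i ≤ w.length, f (p.getD i t) = w.getVert i := fun i hi => by
    rw [← List.getD_map p t f, hp, w.getD_support hi]
  rw [pathLength, List.sum_zipWith_tail_eq_sum_range _ _ t, hlen, Nat.add_sub_cancel]
  refine windowBound_le_sum_of_forall_window _ _ fun i j hij hj => ?_
  obtain ⟨k, hk, hdk⟩ := IsUltrametricDist.exists_dist_le_dist_succ (p.getD · t) hij
  refine ⟨k, hk, le_trans ?_ hdk⟩
  have := hnc (p.getD i t) (p.getD j t)
  rwa [hfu i (by omega), hfu j hj, w.dist_getVert_of_length_eq_dist hw hij.le hj,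
    Nat.cast_sub hij.le] at this

theorem graph_path_embedding_ultrametric_lower_bound_general
    {V : Type*} (G : SimpleGraph V) (hG : G.Connected)
    (Δ : ℕ) (hΔ : 1 ≤ Δ)
    (hdiam_eq : ∃ a b : V, G.dist a b = Δ)
    (T : Type*) [MetricSpace T] (hT : IsUltrametricSpace T)
    (f : T → V) (α : ℝ)
    (hnc : ∀ u v : T, (G.dist (f u) (f v) : ℝ) ≤ dist u v)
    (hpd : GraphPathDistortionLE G f α) :
    ((Δ : ℝ) + 1) * Real.logb 2 ((Δ : ℝ) + 1) / (2 * (Δ : ℝ)) ≤ α := by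
  have : IsUltrametricDist T := ⟨hT⟩
  obtain ⟨a, b, hab⟩ := hdiam_eq
  obtain ⟨w, hw⟩ := hG.exists_walk_length_eq_dist a b
  obtain ⟨p, hp, hlen⟩ := hpd w.support
  have hbound := windowBound_le_pathLength_of_map_eq_support f hnc w hw hp
  rw [w.graphPathLength_support, hw, hab] at hlen
  rw [hw, hab, windowBound] at hbound
  have hΔpos : (0 : ℝ) < Δ := by exact_mod_cast hΔ
  rw [div_le_iff₀ (by positivity)]
  linarith

/-- Lower bound: any surjective non-contractive multi-embedding of the shortest-path
metric of a finite connected graph of diameter `Δ ≥ 1` into an ultrametric space has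
path distortion at least `(Δ+1)·log₂(Δ+1) / (2Δ)`. -/
theorem graph_path_embedding_ultrametric_lower_bound
    {V : Type*} [Fintype V] (G : SimpleGraph V) (hG : G.Connected)
    (Δ : ℕ) (hΔ : 1 ≤ Δ)
    (hdiam_le : ∀ a b : V, G.dist a b ≤ Δ)
    (hdiam_eq : ∃ a b : V, G.dist a b = Δ)
    (T : Type*) [MetricSpace T] (hT : IsUltrametricSpace T)
    (f : T → V) (α : ℝ)
    (hsurj : Function.Surjective f)
    (hnc : ∀ u v : T, (G.dist (f u) (f v) : ℝ) ≤ dist u v)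
    (hpd : GraphPathDistortionLE G f α) :
    ((Δ : ℝ) + 1) * Real.logb 2 ((Δ : ℝ) + 1) / (2 * (Δ : ℝ)) ≤ α :=
  graph_path_embedding_ultrametric_lower_bound_general G hG Δ hΔ hdiam_eq T hT f α hnc hpd
end

section
/- Every finite metric space M admits a (possibly infinite) metric space N satisfying the four-point condition together with a surjective non-contractive multi-embedding f : N → M of path distortion 1; that is, every path ⟨u_1,…,u_m⟩ in M has a lift ⟨u'_1,…,u'_m⟩ in N with f(u'_i) = u_i and Σ_{i=1}^{m−1} d_N(u'_i,u'_{i+1}) ≤ Σ_{i=1}^{m−1} d_M(u_i,u_{i+1}). -/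
/-!
Lay every path of `M` out along its own ray of a star: the `k`-th point of a path `p` sits at
height `diam M + ℓ(p.drop k)` above a common centre. Points on one ray are then as far apart as
the path between them is long, and points on distinct rays are at least `diam M` apart, so the
projection to `M` is non-contractive while each path lifts to its own ray with the same length.
A star is a tree metric: its Gromov product with respect to the centre,
`min (height x) (height y)` on a common ray and `0` otherwise, is ultrametric, and that alone
forces the four-point condition. Identifying points at distance `0` gives a metric space.
-/

/-- A metric space satisfying the four-point condition (a tree metric). -/
def FourPointCond (X : Type*) [MetricSpace X] : Prop :=
  ∀ x y z w : X, dist x y + dist z w ≤ max (dist x z + dist y w) (dist x w + dist y z)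

/-- A multi-embedding `f : N → M` (a surjective map) is non-contractive if
distances in `N` dominate the distances of the images in `M`. -/
def NonContractive {N M : Type*} [MetricSpace N] [MetricSpace M] (f : N → M) : Prop :=
  ∀ u v : N, dist (f u) (f v) ≤ dist u v

/-- A non-contractive multi-embedding `f : N → M` has path distortion at most `α`. -/
def PathDistortionLE {N M : Type*} [MetricSpace N] [MetricSpace M] (f : N → M) (α : ℝ) : Prop :=
  ∀ p : List M, ∃ p' : List N, p'.map f = p ∧ pathLength p' ≤ α * pathLength p

open Function

section PathLength

variable {X : Type*} [MetricSpace X]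

theorem pathLength_cons_cons (a b : X) (l : List X) :
    pathLength (a :: b :: l) = dist a b + pathLength (b :: l) := by
  simp [pathLength]

theorem pathLength_drop_eq_dist_add {l : List X} {k : ℕ} (hk : k + 1 < l.length) :
    pathLength (l.drop k) = dist l[k] l[k + 1] + pathLength (l.drop (k + 1)) := by
  rw [List.drop_eq_getElem_cons (by omega), List.drop_eq_getElem_cons hk, pathLength_cons_cons]

theorem pathLength_nonneg (l : List X) : 0 ≤ pathLength l :=
  List.sum_nonneg fun _ hd => by
    obtain ⟨_, _, rfl⟩ := List.mem_iff_getElem.1 hd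
    simp only [List.getElem_zipWith, dist_nonneg]

theorem dist_getElem_add_pathLength_drop_le {l : List X} {i j : ℕ} (hij : i ≤ j)
    (hj : j < l.length) :
    dist l[i] l[j] + pathLength (l.drop j) ≤ pathLength (l.drop i) := by
  induction j, hij using Nat.le_induction with
  | base => simp
  | succ j hij ih =>
    have := pathLength_drop_eq_dist_add hj
    linarith [ih (by omega), dist_triangle l[i] l[j] l[j + 1]]

theorem pathLength_congr {Y : Type*} [MetricSpace Y] {l : List X} {l' : List Y}
    (hlen : l.length = l'.length)
    (hdist : ∀ i (hi : i + 1 < l.length), dist l[i] l[i + 1] = dist l'[i] l'[i + 1]) :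
    pathLength l = pathLength l' := by
  unfold pathLength
  congr 1
  apply List.ext_getElem (by simp [hlen])
  intro i hi _
  simp only [List.getElem_zipWith, List.getElem_tail]
  exact hdist i (by simp at hi; omega)

theorem PathDistortionLE.surjective {N M : Type*} [MetricSpace N] [MetricSpace M] {f : N → M}
    {α : ℝ} (hf : PathDistortionLE f α) : Surjective f := fun m => by
  obtain ⟨p', hp', -⟩ := hf [m]
  obtain ⟨x, -, hx⟩ := List.mem_map.1 (hp' ▸ List.mem_singleton_self m)
  exact ⟨x, hx⟩

end PathLength

section GromovProduct

variable {X : Type*}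

theorem min_add_le_add_of_min_le {g : X → X → ℝ} (hsymm : ∀ x y, g x y = g y x)
    (hmin : ∀ x y z, min (g x z) (g z y) ≤ g x y) (x y z w : X) :
    min (g x z + g y w) (g x w + g y z) ≤ g x y + g z w := by
  have h₁ := hmin x y z
  have h₂ := hmin x y w
  have h₃ := hmin z w x
  have h₄ := hmin z w y
  rw [hsymm z x] at h₃
  rw [hsymm z y] at h₁ h₄
  rw [hsymm w y] at h₂
  have := min_le_left (g x z + g y w) (g x w + g y z)
  have := min_le_right (g x z + g y w) (g x w + g y z)
  simp only [min_le_iff] at h₁ h₂ h₃ h₄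
  rcases h₁ with h₁ | h₁ <;> rcases h₂ with h₂ | h₂ <;> rcases h₃ with h₃ | h₃ <;>
    rcases h₄ with h₄ | h₄ <;> linarith

theorem four_point_of_gromovProduct (h : X → ℝ) {g : X → X → ℝ} (hsymm : ∀ x y, g x y = g y x)
    (hmin : ∀ x y z, min (g x z) (g z y) ≤ g x y) (x y z w : X) :
    (h x + h y - 2 * g x y) + (h z + h w - 2 * g z w) ≤
      max ((h x + h z - 2 * g x z) + (h y + h w - 2 * g y w))
        ((h x + h w - 2 * g x w) + (h y + h z - 2 * g y z)) := by
  rcases min_le_iff.1 (min_add_le_add_of_min_le hsymm hmin x y z w) with h' | h'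
  · exact le_max_of_le_left (by linarith)
  · exact le_max_of_le_right (by linarith)

/-- `g x y` plays the role of the Gromov product `(x | y)` with respect to a base point at
distance `h x` from each `x`. -/
@[reducible]
def PseudoMetricSpace.ofGromovProduct (h : X → ℝ) (g : X → X → ℝ)
    (hsymm : ∀ x y, g x y = g y x) (hself : ∀ x, g x x = h x)
    (hmin : ∀ x y z, min (g x z) (g z y) ≤ g x y) : PseudoMetricSpace X where
  dist x y := h x + h y - 2 * g x y
  dist_self x := by simp only [hself]; ring
  dist_comm x y := by simp only [hsymm x y]; ring
  dist_triangle x y z := by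
    have := four_point_of_gromovProduct h hsymm hmin x z y y
    simp only [hself, max_self, hsymm z y] at this
    linarith

end GromovProduct

theorem LipschitzWith.nonContractive_lift {X M : Type*} [PseudoMetricSpace X] [MetricSpace M]
    {f : X → M} (hf : LipschitzWith 1 f) :
    NonContractive (SeparationQuotient.lift f fun _ _ hxy => (hxy.map hf.continuous).eq) := by
  intro u v
  obtain ⟨u, rfl⟩ := SeparationQuotient.surjective_mk u
  obtain ⟨v, rfl⟩ := SeparationQuotient.surjective_mk v
  simpa [SeparationQuotient.dist_mk] using hf.dist_le_mul _ _

theorem fourPointCond_separationQuotient {X : Type*} [PseudoMetricSpace X]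
    (h : ∀ x y z w : X, dist x y + dist z w ≤ max (dist x z + dist y w) (dist x w + dist y z)) :
    FourPointCond (SeparationQuotient X) := by
  intro x y z w
  obtain ⟨x, rfl⟩ := SeparationQuotient.surjective_mk x
  obtain ⟨y, rfl⟩ := SeparationQuotient.surjective_mk y
  obtain ⟨z, rfl⟩ := SeparationQuotient.surjective_mk z
  obtain ⟨w, rfl⟩ := SeparationQuotient.surjective_mk w
  simpa only [SeparationQuotient.dist_mk] using h _ _ _ _

/-- The star of the paths `γ b`: the points of each path `γ b` lie on a ray of their own, and
rays only meet at a common centre. -/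
structure StarOfPaths {M B : Type*} (γ : B → List M) where
  branch : B
  index : Fin (γ branch).length

namespace StarOfPaths

open Set

variable {M B : Type*} [MetricSpace M] {γ : B → List M}

/-- Distance to the centre. The offset `diam M` keeps points on distinct rays at least `diam M`
apart. -/
noncomputable def height (x : StarOfPaths γ) : ℝ :=
  Metric.diam (univ : Set M) + pathLength ((γ x.branch).drop x.index)

theorem diam_univ_le_height (x : StarOfPaths γ) : Metric.diam (univ : Set M) ≤ height x :=
  le_add_of_nonneg_right (pathLength_nonneg _)

theorem height_nonneg (x : StarOfPaths γ) : 0 ≤ height x :=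
  Metric.diam_nonneg.trans (diam_univ_le_height x)

open Classical in
noncomputable def gromovProduct (x y : StarOfPaths γ) : ℝ :=
  if x.branch = y.branch then min (height x) (height y) else 0

theorem gromovProduct_comm (x y : StarOfPaths γ) : gromovProduct x y = gromovProduct y x := by
  by_cases h : x.branch = y.branch <;> simp [gromovProduct, h, Ne.symm, min_comm]

theorem gromovProduct_self (x : StarOfPaths γ) : gromovProduct x x = height x := by
  simp [gromovProduct]

theorem min_gromovProduct_le (x y z : StarOfPaths γ) :
    min (gromovProduct x z) (gromovProduct z y) ≤ gromovProduct x y := by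
  have := height_nonneg x
  have := height_nonneg y
  have := height_nonneg z
  unfold gromovProduct
  split_ifs <;> simp_all

noncomputable instance : PseudoMetricSpace (StarOfPaths γ) :=
  .ofGromovProduct height gromovProduct gromovProduct_comm gromovProduct_self min_gromovProduct_le

theorem dist_eq (x y : StarOfPaths γ) :
    dist x y = height x + height y - 2 * gromovProduct x y := rfl

theorem dist_mk_mk (b : B) (i j : Fin (γ b).length) :
    dist (⟨b, i⟩ : StarOfPaths γ) ⟨b, j⟩ =
      |pathLength ((γ b).drop i) - pathLength ((γ b).drop j)| := by
  have add_sub_two_mul_min (a c : ℝ) : a + c - 2 * min a c = |a - c| := by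
    rw [← min_add_max a c, ← max_sub_min_eq_abs']; ring
  rw [dist_eq, gromovProduct, if_pos rfl, add_sub_two_mul_min, height, height,
    add_sub_add_left_eq_sub]

theorem dist_mk_mk_succ (b : B) {k : ℕ} (hk : k + 1 < (γ b).length) :
    dist (⟨b, ⟨k, by omega⟩⟩ : StarOfPaths γ) ⟨b, ⟨k + 1, hk⟩⟩ = dist (γ b)[k] (γ b)[k + 1] := by
  rw [dist_mk_mk, pathLength_drop_eq_dist_add hk, add_sub_cancel_right,
    abs_of_nonneg dist_nonneg]

theorem dist_of_branch_ne {x y : StarOfPaths γ} (h : x.branch ≠ y.branch) :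
    dist x y = height x + height y := by
  rw [dist_eq, gromovProduct, if_neg h, mul_zero, sub_zero]

theorem four_point (x y z w : StarOfPaths γ) :
    dist x y + dist z w ≤ max (dist x z + dist y w) (dist x w + dist y z) :=
  four_point_of_gromovProduct height gromovProduct_comm min_gromovProduct_le x y z w

def proj (x : StarOfPaths γ) : M := (γ x.branch)[x.index]

theorem dist_proj_le_of_index_le (b : B) {i j : Fin (γ b).length} (hij : i ≤ j) :
    dist (proj (⟨b, i⟩ : StarOfPaths γ)) (proj ⟨b, j⟩) ≤ dist (⟨b, i⟩ : StarOfPaths γ) ⟨b, j⟩ := by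
  have hpath := dist_getElem_add_pathLength_drop_le (l := γ b) (Fin.le_def.1 hij) j.2
  have := dist_nonneg (x := (γ b)[(i : ℕ)]) (y := (γ b)[(j : ℕ)])
  rw [dist_mk_mk, abs_of_nonneg (by linarith)]
  exact le_sub_iff_add_le.2 hpath

theorem dist_proj_le_of_branch_ne [BoundedSpace M] {x y : StarOfPaths γ}
    (h : x.branch ≠ y.branch) : dist (proj x) (proj y) ≤ dist x y := by
  rw [dist_of_branch_ne h]
  linarith [diam_univ_le_height x, height_nonneg y,
    Metric.dist_le_diam_of_mem (Bornology.IsBounded.all univ) (mem_univ (proj x))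
      (mem_univ (proj y))]

theorem lipschitzWith_one_proj [BoundedSpace M] : LipschitzWith 1 (proj (γ := γ)) := by
  refine LipschitzWith.mk_one fun ⟨b, i⟩ ⟨b', j⟩ => ?_
  by_cases hb : b = b'
  · subst hb
    rcases le_total i j with hij | hji
    · exact dist_proj_le_of_index_le b hij
    · rw [dist_comm, dist_comm (α := StarOfPaths γ)]
      exact dist_proj_le_of_index_le b hji
  · exact dist_proj_le_of_branch_ne hb

end StarOfPaths

open StarOfPaths in
theorem exists_tree_multiEmbedding_of_surjective_paths.{u} {M : Type*} {B : Type u}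
    [MetricSpace M] [BoundedSpace M] {γ : B → List M} (hγ : Surjective γ) :
    ∃ (N : Type u) (_ : MetricSpace N) (f : N → M),
      FourPointCond N ∧ Surjective f ∧ NonContractive f ∧ PathDistortionLE f 1 := by
  set f := SeparationQuotient.lift proj fun _ _ hxy =>
    (hxy.map (lipschitzWith_one_proj (γ := γ)).continuous).eq
  have hdistortion : PathDistortionLE f 1 := by
    intro p
    obtain ⟨b, rfl⟩ := hγ p
    refine ⟨List.ofFn fun k => SeparationQuotient.mk (⟨b, k⟩ : StarOfPaths γ), ?_, ?_⟩
    · simp [List.map_ofFn, comp_def, f, proj]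
    · rw [one_mul]
      refine (pathLength_congr (by simp) fun k hk => ?_).le
      simp only [List.getElem_ofFn, SeparationQuotient.dist_mk]
      exact dist_mk_mk_succ b (by simpa using hk)
  exact ⟨_, inferInstance, f, fourPointCond_separationQuotient four_point, hdistortion.surjective,
    lipschitzWith_one_proj.nonContractive_lift, hdistortion⟩

/-- Every finite metric space admits a (possibly infinite) tree metric — a metric space
satisfying the four-point condition — together with a surjective non-contractive
multi-embedding of path distortion `1`. -/
theorem multiEmbedding_into_infinite_tree_distortion_one
    (M : Type*) [MetricSpace M] [Fintype M] :
    ∃ (N : Type) (_ : MetricSpace N) (f : N → M),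
      FourPointCond N ∧
      Function.Surjective f ∧
      NonContractive f ∧
      PathDistortionLE f 1 :=
  -- paths indexed by lists over `Fin n`, so that the star lives in `Type`
  exists_tree_multiEmbedding_of_surjective_paths
    (List.map_surjective_iff.2 (Fintype.equivFin M).symm.surjective)
end

section
/- Let f : N → M be a surjective non-contractive multi-embedding of a metric space M in a metric space N with path distortion at most α, where α ≥ 1. Then for every finite task sequence σ = (τ_1,…,τ_m) on M, the lifted task sequence σ^N = (τ_1∘f,…,τ_m∘f) on N satisfies Opt_N(σ^N) ≤ α·Opt_M(σ). -/
open ENNReal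

/-- The optimal offline cost of serving the task sequence `σ` in the metrical task
system on `S`: the infimum over all state sequences `s_0, s_1, …, s_m` of the sum of the
movement costs `d(s_{i-1}, s_i)` and the service costs `τ_i(s_i)` (the initial state
`s_0` is unconstrained). -/
noncomputable def mtsOpt {S : Type*} [MetricSpace S] (σ : List (S → ℝ≥0∞)) : ℝ≥0∞ :=
  ⨅ s : Fin (σ.length + 1) → S,
    ∑ i : Fin σ.length, (edist (s i.castSucc) (s i.succ) + σ.get i (s i.succ))

/-! Given a state sequence `s` in `M`, path distortion lifts the path `s_0, …, s_m` to a path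
`s'_0, …, s'_m` in `N` over it, of length at most `α` times that of `s`. Since the lifted tasks
satisfy `(τ_i ∘ f)(s'_i) = τ_i(s_i)`, serving `σ^N` along `s'` costs at most `α` times the
movement of `s` plus the same service cost, hence at most `α` times the cost of `s` as `α ≥ 1`. -/

lemma pathLength_ofFn {X : Type*} [MetricSpace X] {n : ℕ} (g : Fin (n + 1) → X) :
    pathLength (List.ofFn g) = ∑ i : Fin n, dist (g i.castSucc) (g i.succ) := by
  induction n with
  | zero => simp [pathLength]
  | succ n ih =>
    have hcons : pathLength (List.ofFn g) =
        dist (g 0) (g 1) + pathLength (List.ofFn (g ∘ Fin.succ)) := by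
      simp [pathLength, List.ofFn_succ]
    rw [hcons, ih, Fin.sum_univ_succ]
    rfl

lemma ofReal_pathLength_ofFn {X : Type*} [MetricSpace X] {n : ℕ} (g : Fin (n + 1) → X) :
    ENNReal.ofReal (pathLength (List.ofFn g)) = ∑ i : Fin n, edist (g i.castSucc) (g i.succ) := by
  rw [pathLength_ofFn, ENNReal.ofReal_sum_of_nonneg fun _ _ => dist_nonneg]
  simp only [edist_dist]

lemma List.exists_ofFn_eq_of_map_eq_ofFn {α β : Type*} {f : α → β} {l : List α} {n : ℕ}
    {g : Fin n → β} (h : l.map f = List.ofFn g) :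
    ∃ g' : Fin n → α, List.ofFn g' = l ∧ f ∘ g' = g := by
  have hlen : l.length = n := by simpa using congrArg List.length h
  subst hlen
  refine ⟨l.get, List.ofFn_get l, List.ofFn_injective ?_⟩
  rw [← List.map_ofFn, List.ofFn_get, h]

lemma mtsOpt_map_comp_le {M N : Type*} [MetricSpace M] [MetricSpace N] (f : N → M)
    (σ : List (M → ℝ≥0∞)) (s : Fin (σ.length + 1) → N) :
    mtsOpt (σ.map (· ∘ f)) ≤
      ∑ i : Fin σ.length, (edist (s i.castSucc) (s i.succ) + σ.get i (f (s i.succ))) := by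
  refine (iInf_le _ (s ∘ Fin.cast (by simp))).trans_eq
    (Fintype.sum_equiv (finCongr (List.length_map _)) _ _ fun i => ?_)
  simp [List.get_eq_getElem]

theorem mtsOpt_lift_le_general
    {M N : Type*} [MetricSpace M] [MetricSpace N]
    (f : N → M) (α : ℝ) (hα : 1 ≤ α)
    (hpd : PathDistortionLE f α)
    (σ : List (M → ℝ≥0∞)) :
    mtsOpt (σ.map (fun τ => τ ∘ f)) ≤ ENNReal.ofReal α * mtsOpt σ := by
  have hα' : 1 ≤ ENNReal.ofReal α := ENNReal.one_le_ofReal.2 hα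
  conv_rhs => rw [mtsOpt, ENNReal.mul_iInf_of_ne (by positivity) ENNReal.ofReal_ne_top]
  refine le_iInf fun s => ?_
  obtain ⟨p', hmap, hlen⟩ := hpd (List.ofFn s)
  obtain ⟨s', rfl, hs⟩ := List.exists_ofFn_eq_of_map_eq_ofFn hmap
  have hfs : ∀ j, f (s' j) = s j := congrFun hs
  have hmove : ∑ i : Fin σ.length, edist (s' i.castSucc) (s' i.succ) ≤
      ENNReal.ofReal α * ∑ i : Fin σ.length, edist (s i.castSucc) (s i.succ) := by
    rw [← ofReal_pathLength_ofFn, ← ofReal_pathLength_ofFn,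
      ← ENNReal.ofReal_mul (by linarith)]
    exact ENNReal.ofReal_le_ofReal hlen
  calc mtsOpt (σ.map (· ∘ f))
      ≤ ∑ i : Fin σ.length, (edist (s' i.castSucc) (s' i.succ) + σ.get i (s i.succ)) :=
        (mtsOpt_map_comp_le f σ s').trans_eq (by simp only [hfs])
    _ ≤ ENNReal.ofReal α * ∑ i : Fin σ.length, edist (s i.castSucc) (s i.succ) +
        ENNReal.ofReal α * ∑ i : Fin σ.length, σ.get i (s i.succ) := by
        rw [Finset.sum_add_distrib]
        exact add_le_add hmove (le_mul_of_one_le_left' hα')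
    _ = ENNReal.ofReal α *
        ∑ i : Fin σ.length, (edist (s i.castSucc) (s i.succ) + σ.get i (s i.succ)) := by
        rw [← mul_add, Finset.sum_add_distrib]

/-- If `f : N → M` is a surjective non-contractive multi-embedding with path distortion
at most `α ≥ 1`, then for every finite task sequence `σ` on `M` the lifted task sequence
`σ^N = (τ_1 ∘ f, …, τ_m ∘ f)` on `N` satisfies `Opt_N(σ^N) ≤ α · Opt_M(σ)`. -/
theorem mtsOpt_lift_le
    {M N : Type*} [MetricSpace M] [MetricSpace N]
    (f : N → M) (α : ℝ) (hα : 1 ≤ α)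
    (hsurj : Function.Surjective f)
    (hnc : NonContractive f)
    (hpd : PathDistortionLE f α)
    (σ : List (M → ℝ≥0∞)) :
    mtsOpt (σ.map (fun τ => τ ∘ f)) ≤ ENNReal.ofReal α * mtsOpt σ :=
  mtsOpt_lift_le_general f α hα hpd σ
end
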